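/- If S is a reduced set of positive integers with |S| ≥ 3, and the skip graph G(S) contains an odd cycle in which every s ∈ S occurs as the skip size of at least one edge, then S contains at least two odd numbers. -/

import Mathlib

/-- The skip graph `G(S)`: for each `s ∈ S` and `k ∈ ℕ`, the vertices `2ks` and `(2k+1)s`
are joined by an edge. -/
def skipGraph (S : Set ℕ) : SimpleGraph ℕ where
  Adj m n := m ≠ n ∧ ∃ s ∈ S, ∃ k : ℕ,
    (m = 2 * k * s ∧ n = 2 * k * s + s) ∨ (n = 2 * k * s ∧ m = 2 * k * s + s)
  symm := by
    constructor
    rintro m n ⟨hmn, s, hs, k, h⟩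
    exact ⟨hmn.symm, s, hs, k, h.symm⟩
  loopless := by
    constructor
    rintro m ⟨hmm, -⟩
    exact hmm rfl

/-- The edge `e` has skip size `s`, i.e. its endpoints differ by `s`. -/
def EdgeSkip (s : ℕ) (e : Sym2 ℕ) : Prop := ∃ m : ℕ, e = s(m, m + s)

/-!
Since `gcd S = 1`, `S` has an odd element `s₀`; suppose it is the only one. An odd vertex `w`
of `G(S)` is only joined downwards, to `w - s` with `w = (2k+1)s`, so `s` is odd, `s = s₀`, and
`w` has at most one neighbour. But the upper endpoint `(2k+1)s₀` of an edge of skip size `s₀`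
is such a vertex, and on a cycle it would have two distinct neighbours.
-/

theorem Finset.exists_odd_of_gcd_eq_one {ι : Type*} {S : Finset ι} {f : ι → ℕ}
    (hS : S.gcd f = 1) : ∃ i ∈ S, Odd (f i) := by
  by_contra! h
  have h2 : 2 ∣ S.gcd f := Finset.dvd_gcd fun i hi => (Nat.not_odd_iff_even.mp (h i hi)).two_dvd
  rw [hS] at h2
  omega

theorem SimpleGraph.Walk.IsCycle.exists_adj_ne {V : Type*} {G : SimpleGraph V} {v w : V}
    {c : G.Walk v v} (hc : c.IsCycle) (hw : w ∈ c.support) :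
    ∃ x y, x ≠ y ∧ G.Adj w x ∧ G.Adj w y := by
  classical
  have hc' := hc.rotate hw
  exact ⟨_, _, hc'.snd_ne_penultimate, (c.rotate w hw).adj_snd hc'.not_nil,
    ((c.rotate w hw).adj_penultimate hc'.not_nil).symm⟩

namespace skipGraph

variable {S : Set ℕ}

theorem exists_eq_mul_of_adj_add {m s : ℕ} (h : (skipGraph S).Adj m (m + s)) :
    s ∈ S ∧ ∃ k, m = 2 * k * s := by
  obtain ⟨hne, t, ht, k, ⟨hm, hms⟩ | ⟨hms, hm⟩⟩ := h
  · obtain rfl : s = t := by omega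
    exact ⟨ht, k, hm⟩
  · omega

theorem odd_add_of_adj_add {m s : ℕ} (h : (skipGraph S).Adj m (m + s)) (hs : Odd s) :
    Odd (m + s) := by
  obtain ⟨-, k, rfl⟩ := exists_eq_mul_of_adj_add h
  exact Even.add_odd ⟨k * s, by ring⟩ hs

theorem exists_odd_add_eq_of_adj_of_odd {w x : ℕ} (hw : Odd w) (h : (skipGraph S).Adj w x) :
    ∃ s ∈ S, Odd s ∧ x + s = w := by
  obtain ⟨-, s, hs, k, ⟨rfl, -⟩ | ⟨rfl, rfl⟩⟩ := h
  · exact absurd hw (Nat.not_odd_iff_even.mpr ⟨k * s, by ring⟩)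
  · exact ⟨s, hs, (Nat.odd_add'.mp hw).mpr ⟨k * s, by ring⟩, rfl⟩

theorem add_eq_of_adj_of_odd {s₀ w x : ℕ} (hS : ∀ s ∈ S, Odd s → s = s₀) (hw : Odd w)
    (h : (skipGraph S).Adj w x) : x + s₀ = w := by
  obtain ⟨s, hs, hodd, rfl⟩ := exists_odd_add_eq_of_adj_of_odd hw h
  rw [hS s hs hodd]

end skipGraph

theorem two_odd_skips_general (S : Finset ℕ) (hred : S.gcd id = 1)
    (hcycle : ∃ (v : ℕ) (c : (skipGraph ↑S).Walk v v), c.IsCycle ∧ Odd c.length ∧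
      ∀ s ∈ S, ∃ e ∈ c.edges, EdgeSkip s e) :
    ∃ s₁ ∈ S, ∃ s₂ ∈ S, s₁ ≠ s₂ ∧ Odd s₁ ∧ Odd s₂ := by
  by_contra! hcon
  obtain ⟨s₀, hs₀, hs₀odd⟩ := Finset.exists_odd_of_gcd_eq_one hred
  have huniq : ∀ s ∈ (S : Set ℕ), Odd s → s = s₀ := fun s hs hodd =>
    by_contra fun hne => hcon s hs s₀ hs₀ hne hodd hs₀odd
  obtain ⟨v, c, hc, -, huse⟩ := hcycle
  obtain ⟨e, he, m, rfl⟩ := huse s₀ hs₀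
  have hw : Odd (m + s₀) := skipGraph.odd_add_of_adj_add (c.edges_subset_edgeSet he) hs₀odd
  obtain ⟨x, y, hxy, hx, hy⟩ := hc.exists_adj_ne (c.snd_mem_support_of_mem_edges he)
  have hxw := skipGraph.add_eq_of_adj_of_odd huniq hw hx
  have hyw := skipGraph.add_eq_of_adj_of_odd huniq hw hy
  omega

/-- If `S` is a reduced skip set with `|S| ≥ 3` generating an odd cycle which uses every skip
size at least once, then `S` contains at least two odd numbers. -/
theorem two_odd_skips (S : Finset ℕ) (hpos : ∀ s ∈ S, 0 < s) (hred : S.gcd id = 1)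
    (hcard : 3 ≤ S.card)
    (hcycle : ∃ (v : ℕ) (c : (skipGraph ↑S).Walk v v), c.IsCycle ∧ Odd c.length ∧
      ∀ s ∈ S, ∃ e ∈ c.edges, EdgeSkip s e) :
    ∃ s₁ ∈ S, ∃ s₂ ∈ S, s₁ ≠ s₂ ∧ Odd s₁ ∧ Odd s₂ :=
  two_odd_skips_general S hred hcycle
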